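/- Let a ≥ b be integers and let ς : [-∞,∞] → [0,1] be an order-preserving homeomorphism. For every point p ∈ J(a,b), the restriction of s_{ab} to the fiber δ_{ab}^{-1}(p) ⊆ K(a;b) is a bijection onto the interval [b,a]; being a continuous bijection from a compact space to a Hausdorff space, it is moreover a homeomorphism, so every fiber of δ_{ab} is homeomorphic to the closed interval [b,a]. -/

import Mathlib

open scoped ENNReal

noncomputable section

namespace JKFlow

/-- `J(m,n) := ∏_{j ∈ ℤ, n < j < m} [0,∞]`, with the product topology. -/
abbrev Jspace (m n : ℤ) : Type :=
  {j : ℤ // n < j ∧ j < m} → ℝ≥0∞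

/-- The boundary `∂J(m,n)`: points with at least one coordinate equal to `∞`. -/
def JBoundary (m n : ℤ) : Set (Jspace m n) :=
  {z | ∃ j, z j = ∞}

/-- The ambient product containing `K(a;b)`. -/
abbrev KAmb (a b : ℤ) : Type :=
  ({j : ℤ // b ≤ j ∧ j < a} → ℝ≥0∞) × ({j : ℤ // b < j ∧ j ≤ a} → ℝ≥0∞)

/-- `K(a;b)` as a subset of the ambient product: the pairs `(x,y)` such that for some
integer `r` with `b ≤ r ≤ a` one has `x_j = 0` for `j < r` and `y_j = 0` for `j > r`. -/
def KSet (a b : ℤ) : Set (KAmb a b) :=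
  {k | ∃ r : ℤ, b ≤ r ∧ r ≤ a ∧
    (∀ j : {j : ℤ // b ≤ j ∧ j < a}, (j : ℤ) < r → k.1 j = 0) ∧
    (∀ j : {j : ℤ // b < j ∧ j ≤ a}, r < (j : ℤ) → k.2 j = 0)}

/-- The boundary `∂K(a;b)`: points with at least one coordinate equal to `∞`. -/
def KBoundary (a b : ℤ) : Set (KAmb a b) :=
  {k | (∃ j, k.1 j = ∞) ∨ (∃ j, k.2 j = ∞)}

/-- The map `δ_{ab} : K(a;b) → J(a,b)`, `δ(x,y)_j = x_j + y_j` for `b < j < a`. -/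
def deltaMap (a b : ℤ) (k : KAmb a b) : Jspace a b :=
  fun j => k.1 ⟨j.1, j.2.1.le, j.2.2⟩ + k.2 ⟨j.1, j.2.1, j.2.2.le⟩

/-- The first coordinate family of a point of `K(a;b)`, extended by `0` to all of `ℤ`. -/
def Xext (a b : ℤ) (k : KAmb a b) (j : ℤ) : ℝ≥0∞ :=
  if h : b ≤ j ∧ j < a then k.1 ⟨j, h⟩ else 0

/-- The second coordinate family of a point of `K(a;b)`, extended by `0` to all of `ℤ`. -/
def Yext (a b : ℤ) (k : KAmb a b) (j : ℤ) : ℝ≥0∞ :=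
  if h : b < j ∧ j ≤ a then k.2 ⟨j, h⟩ else 0

/-- The composition of `ς : [-∞,∞] ≃ₜ [0,1]` with the inclusion `[0,1] ⊆ ℝ`. -/
def sigmaR (ς : EReal ≃ₜ Set.Icc (0 : ℝ) 1) : EReal → ℝ :=
  fun z => (ς z : ℝ)

/-- The map `s_{ab} : K(a;b) → ℝ` (defined on the ambient product), relative to a
function `σ : [-∞,∞] → ℝ`:
`s(x,y) = a − Σ_{i=b}^{a−1} σ((Σ_{b≤l≤i} x_l) − (Σ_{i<l≤a} y_l))`. -/
def sMap (a b : ℤ) (σ : EReal → ℝ) (k : KAmb a b) : ℝ :=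
  (a : ℝ) - ∑ i ∈ Finset.Ico b a,
    σ ((↑(∑ l ∈ Finset.Icc b i, Xext a b k l) : EReal)
        - (↑(∑ l ∈ Finset.Ioc i a, Yext a b k l) : EReal))

/-- The composition map `i_{mpn} : J(m,p) × J(p,n) → J(m,n)`: the coordinates are those
of `u` for `p < j < m`, equal to `∞` at `j = p`, and those of `v` for `n < j < p`. -/
def iComp (m p n : ℤ) (u : Jspace m p) (v : Jspace p n) : Jspace m n :=
  fun j =>
    if h : p < (j : ℤ) then u ⟨j.1, h, j.2.2⟩
    else if h' : (j : ℤ) < p then v ⟨j.1, j.2.1, h'⟩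
    else ∞

/-- The left composition map `κ^L : J(a,a') × K(a';b) → K(a;b)`. -/
def kappaL (a a' b : ℤ) (z : Jspace a a') (k : KAmb a' b) : KAmb a b :=
  (fun j =>
      if h : a' < (j : ℤ) then z ⟨j.1, h, j.2.2⟩
      else if h' : (j : ℤ) < a' then k.1 ⟨j.1, j.2.1, h'⟩
      else ∞,
    fun j => if h : (j : ℤ) ≤ a' then k.2 ⟨j.1, j.2.1, h⟩ else 0)

/-- The right composition map `κ^R : K(a;b') × J(b',b) → K(a;b)`. -/
def kappaR (a b' b : ℤ) (k : KAmb a b') (w : Jspace b' b) : KAmb a b :=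
  (fun j => if h : b' ≤ (j : ℤ) then k.1 ⟨j.1, h, j.2.2⟩ else 0,
    fun j =>
      if h : b' < (j : ℤ) then k.2 ⟨j.1, h, j.2.2⟩
      else if h' : (j : ℤ) < b' then w ⟨j.1, j.2.1, h'⟩
      else ∞)

end JKFlow

open JKFlow

/-!
A point of the fiber `δ⁻¹(p)` is given by a cut `r ∈ [b,a]` and the pair `(x_r, y_r)`, subject to
`x_r + y_r = p_r` when `b < r < a`; all other coordinates are `0` or `p_j`. For fixed `r` these
points form a compact connected set containing the point where the set for `r + 1` begins, so
the fiber is compact and connected. Of two points of the fiber, one has all `x`-coordinates below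
and all `y`-coordinates above those of the other, so the arguments
`Σ_{l ≤ i} x_l - Σ_{l > i} y_l` of `ς` in `s_{ab}` compare coordinatewise; since they also
determine the point, the strictly increasing `ς` makes `s_{ab}` injective on the fiber. Its values
at the two ends are `b` and `a`, so it is onto `[b,a]` by the intermediate value theorem, and a
homeomorphism because the fiber is compact.
-/

namespace JKFlow

open Finset

lemma le_and_le_or_le_and_le_of_add_eq {t u t' u' : ℝ≥0∞} (h : t + u = t' + u') :
    (t ≤ t' ∧ u' ≤ u) ∨ (t' ≤ t ∧ u ≤ u') := by
  rcases lt_trichotomy t t' with ht | rfl | ht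
  · exact .inl ⟨ht.le, not_lt.1 fun hu => (ENNReal.add_lt_add ht hu).ne h⟩
  · exact (le_total u' u).imp (⟨le_rfl, ·⟩) (⟨le_rfl, ·⟩)
  · exact .inr ⟨ht.le, not_lt.1 fun hu => (ENNReal.add_lt_add ht hu).ne h.symm⟩

lemma isPreconnected_setOf_add_eq (c : ℝ≥0∞) :
    IsPreconnected {q : ℝ≥0∞ × ℝ≥0∞ | q.1 + q.2 = c} := by
  by_cases hc : c = ⊤
  · have h : {q : ℝ≥0∞ × ℝ≥0∞ | q.1 + q.2 = c} = {⊤} ×ˢ Set.univ ∪ Set.univ ×ˢ {⊤} := by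
      ext q; simp [hc, ENNReal.add_eq_top]
    rw [h]
    exact (isPreconnected_singleton.prod isPreconnected_univ).union (⊤, ⊤) (by simp) (by simp)
      (isPreconnected_univ.prod isPreconnected_singleton)
  · have h : {q : ℝ≥0∞ × ℝ≥0∞ | q.1 + q.2 = c} = Set.range fun t => (min t c, c - t) := by
      ext ⟨t, u⟩
      simp only [Set.mem_ofPred_eq, Set.mem_range, Prod.mk.injEq]
      constructor
      · rintro rfl
        exact ⟨t, min_eq_left le_self_add,
          ENNReal.add_sub_cancel_left (ne_top_of_le_ne_top hc le_self_add)⟩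
      · rintro ⟨s, rfl, rfl⟩
        rcases le_total s c with hs | hs
        · rw [min_eq_left hs, add_tsub_cancel_of_le hs]
        · rw [min_eq_right hs, tsub_eq_zero_of_le hs, add_zero]
    rw [h]
    exact isPreconnected_range ((continuous_id.min continuous_const).prodMk
      (ENNReal.continuous_sub_left hc))

lemma eq_and_eq_of_coe_sub_coe_eq {A B A' B' : ℝ≥0∞} (h0 : A = 0 ∨ B = 0)
    (h0' : A' = 0 ∨ B' = 0) (h : (A : EReal) - B = A' - B') : A = A' ∧ B = B' := by
  have key : ∀ {A B : ℝ≥0∞}, A = 0 ∨ B = 0 →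
      ((A : EReal) - B).toENNReal = A ∧ (-((A : EReal) - B)).toENNReal = B := by
    rintro A B (rfl | rfl) <;> simp
  exact ⟨(key h0).1.symm.trans (h ▸ (key h0').1), (key h0).2.symm.trans (h ▸ (key h0').2)⟩

lemma continuousAt_coe_sub_coe {A B : ℝ≥0∞} (h : A ≠ ⊤ ∨ B ≠ ⊤) :
    ContinuousAt (fun q : ℝ≥0∞ × ℝ≥0∞ => (q.1 : EReal) - q.2) (A, B) := by
  have hadd := EReal.continuousAt_add (p := ((A : EReal), -(B : EReal))) (by simpa using h)
    (.inl (EReal.coe_ennreal_ne_bot A))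
  simp only [sub_eq_add_neg]
  exact hadd.comp (x := (A, B)) (f := fun q : ℝ≥0∞ × ℝ≥0∞ => ((q.1 : EReal), -(q.2 : EReal)))
    ((continuous_coe_ennreal_ereal.comp continuous_fst).prodMk
      (continuous_coe_ennreal_ereal.comp continuous_snd).neg).continuousAt

lemma card_Ico_cast {a b : ℤ} (h : b ≤ a) : ((Ico b a).card : ℝ) = a - b := by
  rw [Int.card_Ico, ← Int.cast_natCast, Int.toNat_of_nonneg (sub_nonneg.2 h), Int.cast_sub]

def lowerSum (b : ℤ) (x : ℤ → ℝ≥0∞) (i : ℤ) : ℝ≥0∞ := ∑ l ∈ Icc b i, x l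

def upperSum (a : ℤ) (y : ℤ → ℝ≥0∞) (i : ℤ) : ℝ≥0∞ := ∑ l ∈ Ioc i a, y l

lemma lowerSum_of_lt {b i : ℤ} (x : ℤ → ℝ≥0∞) (h : i < b) : lowerSum b x i = 0 := by
  simp [lowerSum, Icc_eq_empty_of_lt h]

lemma upperSum_of_le {a i : ℤ} (y : ℤ → ℝ≥0∞) (h : a ≤ i) : upperSum a y i = 0 := by
  simp [upperSum, Ioc_eq_empty_of_le h]

lemma lowerSum_sub_one_add {b j : ℤ} (x : ℤ → ℝ≥0∞) (h : b ≤ j) :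
    lowerSum b x (j - 1) + x j = lowerSum b x j := by
  have : Icc b j = insert j (Icc b (j - 1)) := by
    ext l; simp only [mem_Icc, mem_insert]; omega
  rw [lowerSum, lowerSum, this, sum_insert (by simp), add_comm]

lemma upperSum_sub_one {a j : ℤ} (y : ℤ → ℝ≥0∞) (h : j ≤ a) :
    upperSum a y (j - 1) = y j + upperSum a y j := by
  have : Ioc (j - 1) a = insert j (Ioc j a) := by
    ext l; simp only [mem_Ioc, mem_insert]; omega
  rw [upperSum, upperSum, this, sum_insert (by simp)]

section Gap

variable {a b : ℤ}

/-- The argument of `ς` in the `i`-th summand of `s_{ab}`. -/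
def gap (a b : ℤ) (k : KAmb a b) (i : ℤ) : EReal :=
  (lowerSum b (Xext a b k) i : EReal) - upperSum a (Yext a b k) i

lemma sMap_eq (σ : EReal → ℝ) (k : KAmb a b) :
    sMap a b σ k = a - ∑ i ∈ Ico b a, σ (gap a b k i) := rfl

lemma sMap_eq_of_forall_gap_eq {σ : EReal → ℝ} {k : KAmb a b} {z : EReal} (hab : b ≤ a)
    (h : ∀ i ∈ Ico b a, gap a b k i = z) : sMap a b σ k = a - (a - b) * σ z := by
  rw [sMap_eq, sum_congr rfl fun i hi => by rw [h i hi], sum_const, nsmul_eq_mul,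
    card_Ico_cast hab]

lemma Xext_coe (k : KAmb a b) (j : {j : ℤ // b ≤ j ∧ j < a}) : Xext a b k j = k.1 j :=
  dif_pos j.2

lemma Yext_coe (k : KAmb a b) (j : {j : ℤ // b < j ∧ j ≤ a}) : Yext a b k j = k.2 j :=
  dif_pos j.2

lemma continuous_Xext (l : ℤ) : Continuous fun k : KAmb a b => Xext a b k l := by
  by_cases h : b ≤ l ∧ l < a
  · simp only [Xext, dif_pos h]
    fun_prop
  · simp only [Xext, dif_neg h, continuous_const]

lemma continuous_Yext (l : ℤ) : Continuous fun k : KAmb a b => Yext a b k l := by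
  by_cases h : b < l ∧ l ≤ a
  · simp only [Yext, dif_pos h]
    fun_prop
  · simp only [Yext, dif_neg h, continuous_const]

def Precedes (k k' : KAmb a b) : Prop :=
  k.1 ≤ k'.1 ∧ k'.2 ≤ k.2

lemma gap_mono {k k' : KAmb a b} (h : Precedes k k') (i : ℤ) : gap a b k i ≤ gap a b k' i := by
  refine EReal.sub_le_sub (EReal.coe_ennreal_le_coe_ennreal_iff.2 (sum_le_sum fun l _ => ?_))
    (EReal.coe_ennreal_le_coe_ennreal_iff.2 (sum_le_sum fun l _ => ?_))
  · unfold Xext; split_ifs; exacts [h.1 _, le_rfl]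
  · unfold Yext; split_ifs; exacts [h.2 _, le_rfl]

end Gap

section Fiber

variable {a b : ℤ} (p : Jspace a b)

def Jext (j : ℤ) : ℝ≥0∞ :=
  if h : b < j ∧ j < a then p ⟨j, h⟩ else 0

def fiber (a b : ℤ) (p : Jspace a b) : Set (KAmb a b) :=
  KSet a b ∩ {k | deltaMap a b k = p}

def cutPoint (r : ℤ) (q : ℝ≥0∞ × ℝ≥0∞) : KAmb a b :=
  (fun j => if (j : ℤ) < r then 0 else if (j : ℤ) = r then q.1 else Jext p j,
   fun j => if r < (j : ℤ) then 0 else if (j : ℤ) = r then q.2 else Jext p j)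

def cutParams (r : ℤ) : Set (ℝ≥0∞ × ℝ≥0∞) :=
  {q | b < r → r < a → q.1 + q.2 = Jext p r}

lemma continuous_cutPoint (r : ℤ) : Continuous (cutPoint p r) :=
  .prodMk
    (continuous_pi fun _ => continuous_if_const _ (fun _ => continuous_const) fun _ =>
      continuous_if_const _ (fun _ => continuous_fst) fun _ => continuous_const)
    (continuous_pi fun _ => continuous_if_const _ (fun _ => continuous_const) fun _ =>
      continuous_if_const _ (fun _ => continuous_snd) fun _ => continuous_const)

lemma cutPoint_succ (r : ℤ) :
    cutPoint p r (0, Jext p r) = cutPoint p (r + 1) (Jext p (r + 1), 0) := by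
  refine Prod.ext (funext fun j => ?_) (funext fun j => ?_) <;>
  · simp only [cutPoint]
    split_ifs <;> first | rfl | omega | simp_all

variable {p} {r j : ℤ} {q : ℝ≥0∞ × ℝ≥0∞}

lemma cutParams_of_interior (h : b < r ∧ r < a) :
    cutParams p r = {q | q.1 + q.2 = Jext p r} := by
  simp [cutParams, h.1, h.2]

lemma cutParams_of_not_interior (h : ¬(b < r ∧ r < a)) : cutParams p r = Set.univ :=
  Set.eq_univ_of_forall fun _ h1 h2 => absurd ⟨h1, h2⟩ h

variable (p) in
lemma isPreconnected_cutParams (r : ℤ) : IsPreconnected (cutParams p r) := by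
  by_cases h : b < r ∧ r < a
  · rw [cutParams_of_interior h]
    exact isPreconnected_setOf_add_eq _
  · rw [cutParams_of_not_interior h]
    exact isPreconnected_univ

variable (p) in
lemma isClosed_cutParams (r : ℤ) : IsClosed (cutParams p r) := by
  by_cases h : b < r ∧ r < a
  · rw [cutParams_of_interior h]
    exact isClosed_eq (continuous_fst.add continuous_snd) continuous_const
  · rw [cutParams_of_not_interior h]
    exact isClosed_univ

lemma fst_le_Jext (hq : q ∈ cutParams p r) (hbr : b < r) (hra : r < a) : q.1 ≤ Jext p r :=
  hq hbr hra ▸ le_self_add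

lemma snd_le_Jext (hq : q ∈ cutParams p r) (hbr : b < r) (hra : r < a) : q.2 ≤ Jext p r :=
  hq hbr hra ▸ le_add_self

lemma Jext_of_notMem (h : ¬(b < j ∧ j < a)) : Jext p j = 0 := dif_neg h

lemma Xext_cutPoint_of_lt (h : j < r) : Xext a b (cutPoint p r q) j = 0 := by
  unfold Xext cutPoint
  split_ifs <;> simp_all

lemma Xext_cutPoint_of_gt (h : r < j) : Xext a b (cutPoint p r q) j = Jext p j := by
  unfold Xext cutPoint
  split_ifs
  · simp only [if_neg (not_lt.2 h.le), if_neg h.ne']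
  · exact (Jext_of_notMem (by omega)).symm

lemma Xext_cutPoint_self (hbr : b ≤ r) (hra : r < a) : Xext a b (cutPoint p r q) r = q.1 := by
  simp [Xext, cutPoint, hbr, hra]

lemma Yext_cutPoint_of_gt (h : r < j) : Yext a b (cutPoint p r q) j = 0 := by
  unfold Yext cutPoint
  split_ifs <;> simp_all

lemma Yext_cutPoint_of_lt (h : j < r) : Yext a b (cutPoint p r q) j = Jext p j := by
  unfold Yext cutPoint
  split_ifs
  · simp only [if_neg (not_lt.2 h.le), if_neg h.ne]
  · exact (Jext_of_notMem (by omega)).symm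

lemma Yext_cutPoint_self (hbr : b < r) (hra : r ≤ a) : Yext a b (cutPoint p r q) r = q.2 := by
  simp [Yext, cutPoint, hbr, hra]

lemma cutPoint_mem_fiber (hr : r ∈ Set.Icc b a) (hq : q ∈ cutParams p r) :
    cutPoint p r q ∈ fiber a b p := by
  refine ⟨⟨r, hr.1, hr.2, fun j hj => if_pos hj, fun j hj => if_pos hj⟩, ?_⟩
  funext ⟨j, hbj, hja⟩
  simp only [deltaMap, cutPoint]
  rcases lt_trichotomy j r with h | rfl | h
  · simp [h, h.ne, not_lt.2 h.le, Jext, hbj, hja]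
  · simpa [Jext, hbj, hja] using hq hbj hja
  · simp [h, h.ne', not_lt.2 h.le, Jext, hbj, hja]

lemma exists_cutPoint_eq {k : KAmb a b} (hk : k ∈ fiber a b p) :
    ∃ r ∈ Set.Icc b a, ∃ q ∈ cutParams p r, cutPoint p r q = k := by
  obtain ⟨⟨r, hbr, hra, hx, hy⟩, hδ⟩ := hk
  have hsum : ∀ j (h : b < j ∧ j < a), k.1 ⟨j, h.1.le, h.2⟩ + k.2 ⟨j, h.1, h.2.le⟩ = p ⟨j, h⟩ :=
    fun j h => congrFun hδ ⟨j, h⟩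
  refine ⟨r, ⟨hbr, hra⟩, (Xext a b k r, Yext a b k r), fun h1 h2 => ?_, ?_⟩
  · simpa [Xext, Yext, Jext, hbr, hra, h1, h2] using hsum r ⟨h1, h2⟩
  refine Prod.ext (funext fun ⟨j, hbj, hja⟩ => ?_) (funext fun ⟨j, hbj, hja⟩ => ?_)
  · rcases lt_trichotomy j r with h | rfl | h
    · simp [cutPoint, h, hx ⟨j, hbj, hja⟩ h]
    · simp [cutPoint, Xext, hbj, hja]
    · have hb : b < j := hbr.trans_lt h
      simpa [cutPoint, h, not_lt.2 h.le, h.ne', Jext, hb, hja, hy ⟨j, hb, hja.le⟩ h]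
        using (hsum j ⟨hb, hja⟩).symm
  · rcases lt_trichotomy j r with h | rfl | h
    · have ha : j < a := h.trans_le hra
      simpa [cutPoint, h, not_lt.2 h.le, h.ne, Jext, hbj, ha, hx ⟨j, hbj.le, ha⟩ h]
        using (hsum j ⟨hbj, ha⟩).symm
    · simp [cutPoint, Yext, hbj, hja]
    · simp [cutPoint, h, hy ⟨j, hbj, hja⟩ h]

lemma fiber_eq_biUnion : fiber a b p = ⋃ r ∈ Set.Icc b a, cutPoint p r '' cutParams p r := by
  ext k
  simp only [Set.mem_iUnion, Set.mem_image, exists_prop]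
  exact ⟨exists_cutPoint_eq, fun ⟨r, hr, q, hq, hk⟩ => hk ▸ cutPoint_mem_fiber hr hq⟩

variable (p) in
lemma isCompact_fiber : IsCompact (fiber a b p) := by
  rw [fiber_eq_biUnion]
  exact (Set.finite_Icc b a).isCompact_biUnion fun r _ =>
    (isClosed_cutParams p r).isCompact.image (continuous_cutPoint p r)

variable (p) in
lemma isPreconnected_fiber : IsPreconnected (fiber a b p) := by
  rw [fiber_eq_biUnion]
  refine .biUnion_of_chain Set.ordConnected_Icc
    (fun r _ => (isPreconnected_cutParams p r).image _ (continuous_cutPoint p r).continuousOn)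
    fun r _ _ => ⟨cutPoint p r (0, Jext p r), ⟨_, fun _ _ => zero_add _, rfl⟩, ?_⟩
  rw [Order.succ_eq_add_one, cutPoint_succ]
  exact ⟨_, fun _ _ => add_zero _, rfl⟩

lemma precedes_cutPoint_of_lt {r' : ℤ} {q' : ℝ≥0∞ × ℝ≥0∞} (hbr : b ≤ r) (hr : r < r')
    (hra : r' ≤ a) (hq : q ∈ cutParams p r) (hq' : q' ∈ cutParams p r') :
    Precedes (cutPoint p r' q') (cutPoint p r q) := by
  constructor <;> intro ⟨j, hbj, hja⟩ <;> simp only [cutPoint]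
  · split_ifs with _ _ _ hj <;> first | exact zero_le | exact le_rfl | omega | skip
    subst hj
    exact fst_le_Jext hq' (hbr.trans_lt hr) hja
  · split_ifs with _ _ _ hj <;> first | exact zero_le | exact le_rfl | omega | skip
    subst hj
    exact snd_le_Jext hq hbj (hr.trans_le hra)

lemma precedes_cutPoint_of_eq {q' : ℝ≥0∞ × ℝ≥0∞} (h1 : r < a → q.1 ≤ q'.1)
    (h2 : b < r → q'.2 ≤ q.2) : Precedes (cutPoint p r q) (cutPoint p r q') := by
  constructor <;> intro ⟨j, hbj, hja⟩ <;> simp only [cutPoint]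
  · split_ifs with _ hj <;> first | exact le_rfl | exact h1 (hj ▸ hja)
  · split_ifs with _ hj <;> first | exact le_rfl | exact h2 (hj ▸ hbj)

lemma precedes_or_precedes_cutPoint {q' : ℝ≥0∞ × ℝ≥0∞} (hq : q ∈ cutParams p r)
    (hq' : q' ∈ cutParams p r) :
    Precedes (cutPoint p r q) (cutPoint p r q') ∨ Precedes (cutPoint p r q') (cutPoint p r q) := by
  by_cases h : b < r ∧ r < a
  · exact (le_and_le_or_le_and_le_of_add_eq ((hq h.1 h.2).trans (hq' h.1 h.2).symm)).imp
      (fun h' => precedes_cutPoint_of_eq (fun _ => h'.1) fun _ => h'.2)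
      (fun h' => precedes_cutPoint_of_eq (fun _ => h'.1) fun _ => h'.2)
  rcases not_and_or.1 h with hb | ha
  · exact (le_total q.1 q'.1).imp (fun h' => precedes_cutPoint_of_eq (fun _ => h') (absurd · hb))
      (fun h' => precedes_cutPoint_of_eq (fun _ => h') (absurd · hb))
  · exact (le_total q'.2 q.2).imp (fun h' => precedes_cutPoint_of_eq (absurd · ha) fun _ => h')
      (fun h' => precedes_cutPoint_of_eq (absurd · ha) fun _ => h')

lemma precedes_or_precedes {k k' : KAmb a b} (hk : k ∈ fiber a b p) (hk' : k' ∈ fiber a b p) :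
    Precedes k k' ∨ Precedes k' k := by
  obtain ⟨r, hr, q, hq, rfl⟩ := exists_cutPoint_eq hk
  obtain ⟨r', hr', q', hq', rfl⟩ := exists_cutPoint_eq hk'
  rcases lt_trichotomy r r' with h | rfl | h
  · exact .inr (precedes_cutPoint_of_lt hr.1 h hr'.2 hq hq')
  · exact precedes_or_precedes_cutPoint hq hq'
  · exact .inl (precedes_cutPoint_of_lt hr'.1 h hr.2 hq' hq)

lemma lowerSum_eq_zero_or_upperSum_eq_zero {k : KAmb a b} (hk : k ∈ fiber a b p) (i : ℤ) :
    lowerSum b (Xext a b k) i = 0 ∨ upperSum a (Yext a b k) i = 0 := by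
  obtain ⟨r, -, q, -, rfl⟩ := exists_cutPoint_eq hk
  by_cases h : i < r
  · exact .inl (sum_eq_zero fun l hl => Xext_cutPoint_of_lt ((mem_Icc.1 hl).2.trans_lt h))
  · exact .inr (sum_eq_zero fun l hl =>
      Yext_cutPoint_of_gt ((not_lt.1 h).trans_lt (mem_Ioc.1 hl).1))

lemma Xext_eq_Jext_of_lowerSum_eq_top {k : KAmb a b} (hk : k ∈ fiber a b p)
    (h : lowerSum b (Xext a b k) (j - 1) = ⊤) : Xext a b k j = Jext p j := by
  obtain ⟨r, -, q, -, rfl⟩ := exists_cutPoint_eq hk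
  obtain ⟨l, hl, hxl⟩ := ENNReal.sum_eq_top.1 h
  have hrl : r ≤ l := not_lt.1 fun hlr => by simp [Xext_cutPoint_of_lt hlr] at hxl
  exact Xext_cutPoint_of_gt (hrl.trans_lt (Int.le_sub_one_iff.1 (mem_Icc.1 hl).2))

lemma Yext_eq_Jext_of_upperSum_eq_top {k : KAmb a b} (hk : k ∈ fiber a b p)
    (h : upperSum a (Yext a b k) j = ⊤) : Yext a b k j = Jext p j := by
  obtain ⟨r, -, q, -, rfl⟩ := exists_cutPoint_eq hk
  obtain ⟨l, hl, hyl⟩ := ENNReal.sum_eq_top.1 h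
  have hlr : l ≤ r := not_lt.1 fun hrl => by simp [Yext_cutPoint_of_gt hrl] at hyl
  exact Yext_cutPoint_of_lt ((mem_Ioc.1 hl).1.trans_le hlr)

/-- A coordinate `x_j` is the difference of consecutive partial sums, unless these are
infinite, in which case the cut lies below `j` and `x_j = p_j`. -/
lemma Xext_eq_of_lowerSum_eq {k k' : KAmb a b} (hk : k ∈ fiber a b p) (hk' : k' ∈ fiber a b p)
    (h₁ : lowerSum b (Xext a b k) (j - 1) = lowerSum b (Xext a b k') (j - 1))
    (h₂ : lowerSum b (Xext a b k) j = lowerSum b (Xext a b k') j) :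
    Xext a b k j = Xext a b k' j := by
  by_cases hbj : b ≤ j
  swap
  · simp [Xext, hbj]
  by_cases htop : lowerSum b (Xext a b k) (j - 1) = ⊤
  · rw [Xext_eq_Jext_of_lowerSum_eq_top hk htop, Xext_eq_Jext_of_lowerSum_eq_top hk' (h₁ ▸ htop)]
  calc Xext a b k j = lowerSum b (Xext a b k) j - lowerSum b (Xext a b k) (j - 1) := by
        rw [← lowerSum_sub_one_add _ hbj, ENNReal.add_sub_cancel_left htop]
    _ = lowerSum b (Xext a b k') j - lowerSum b (Xext a b k') (j - 1) := by rw [h₁, h₂]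
    _ = Xext a b k' j := by
        rw [← lowerSum_sub_one_add _ hbj, ENNReal.add_sub_cancel_left (h₁ ▸ htop)]

lemma Yext_eq_of_upperSum_eq {k k' : KAmb a b} (hk : k ∈ fiber a b p) (hk' : k' ∈ fiber a b p)
    (h₁ : upperSum a (Yext a b k) (j - 1) = upperSum a (Yext a b k') (j - 1))
    (h₂ : upperSum a (Yext a b k) j = upperSum a (Yext a b k') j) :
    Yext a b k j = Yext a b k' j := by
  by_cases hja : j ≤ a
  swap
  · simp [Yext, hja]
  by_cases htop : upperSum a (Yext a b k) j = ⊤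
  · rw [Yext_eq_Jext_of_upperSum_eq_top hk htop, Yext_eq_Jext_of_upperSum_eq_top hk' (h₂ ▸ htop)]
  calc Yext a b k j = upperSum a (Yext a b k) (j - 1) - upperSum a (Yext a b k) j := by
        rw [upperSum_sub_one _ hja, ENNReal.add_sub_cancel_right htop]
    _ = upperSum a (Yext a b k') (j - 1) - upperSum a (Yext a b k') j := by rw [h₁, h₂]
    _ = Yext a b k' j := by
        rw [upperSum_sub_one _ hja, ENNReal.add_sub_cancel_right (h₂ ▸ htop)]

lemma eq_of_gap_eq {k k' : KAmb a b} (hk : k ∈ fiber a b p) (hk' : k' ∈ fiber a b p)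
    (h : ∀ i ∈ Ico b a, gap a b k i = gap a b k' i) : k = k' := by
  have hsums : ∀ i ∈ Ico b a, lowerSum b (Xext a b k) i = lowerSum b (Xext a b k') i ∧
      upperSum a (Yext a b k) i = upperSum a (Yext a b k') i := fun i hi =>
    eq_and_eq_of_coe_sub_coe_eq (lowerSum_eq_zero_or_upperSum_eq_zero hk i)
      (lowerSum_eq_zero_or_upperSum_eq_zero hk' i) (h i hi)
  have hlower : ∀ i < a, lowerSum b (Xext a b k) i = lowerSum b (Xext a b k') i := by
    intro i hia
    by_cases hbi : b ≤ i
    · exact (hsums i (mem_Ico.2 ⟨hbi, hia⟩)).1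
    · rw [lowerSum_of_lt _ (not_le.1 hbi), lowerSum_of_lt _ (not_le.1 hbi)]
  have hupper : ∀ i, b ≤ i → upperSum a (Yext a b k) i = upperSum a (Yext a b k') i := by
    intro i hbi
    by_cases hia : i < a
    · exact (hsums i (mem_Ico.2 ⟨hbi, hia⟩)).2
    · rw [upperSum_of_le _ (not_lt.1 hia), upperSum_of_le _ (not_lt.1 hia)]
  refine Prod.ext (funext fun j => ?_) (funext fun j => ?_)
  · rw [← Xext_coe, ← Xext_coe]
    exact Xext_eq_of_lowerSum_eq hk hk' (hlower _ (by omega)) (hlower _ j.2.2)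
  · rw [← Yext_coe, ← Yext_coe]
    exact Yext_eq_of_upperSum_eq hk hk' (hupper _ (by omega)) (hupper _ j.2.1.le)

lemma gap_cutPoint_b_top_zero {i : ℤ} (hi : i ∈ Ico b a) :
    gap a b (cutPoint p b (⊤, 0)) i = ⊤ := by
  rw [mem_Ico] at hi
  have hlower : lowerSum b (Xext a b (cutPoint p b (⊤, 0))) i = ⊤ :=
    ENNReal.sum_eq_top.2 ⟨b, mem_Icc.2 ⟨le_rfl, hi.1⟩,
      Xext_cutPoint_self le_rfl (hi.1.trans_lt hi.2)⟩
  have hupper : upperSum a (Yext a b (cutPoint p b (⊤, 0))) i = 0 :=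
    sum_eq_zero fun l hl => Yext_cutPoint_of_gt (hi.1.trans_lt (mem_Ioc.1 hl).1)
  simp [gap, hlower, hupper]

lemma gap_cutPoint_a_zero_top {i : ℤ} (hi : i ∈ Ico b a) :
    gap a b (cutPoint p a (0, ⊤)) i = ⊥ := by
  rw [mem_Ico] at hi
  have hlower : lowerSum b (Xext a b (cutPoint p a (0, ⊤))) i = 0 :=
    sum_eq_zero fun l hl => Xext_cutPoint_of_lt ((mem_Icc.1 hl).2.trans_lt hi.2)
  have hupper : upperSum a (Yext a b (cutPoint p a (0, ⊤))) i = ⊤ :=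
    ENNReal.sum_eq_top.2 ⟨a, mem_Ioc.2 ⟨hi.2, le_rfl⟩,
      Yext_cutPoint_self (hi.1.trans_lt hi.2) le_rfl⟩
  simp [gap, hlower, hupper]

variable (p)

lemma continuousOn_sMap {σ : EReal → ℝ} (hσ : Continuous σ) :
    ContinuousOn (sMap a b σ) (fiber a b p) := by
  refine continuousOn_const.sub (continuousOn_finsetSum _ fun i _ k hk => ?_)
  have hne : lowerSum b (Xext a b k) i ≠ ⊤ ∨ upperSum a (Yext a b k) i ≠ ⊤ :=
    (lowerSum_eq_zero_or_upperSum_eq_zero hk i).imp (by simp [·]) (by simp [·])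
  have hsums : Continuous fun k : KAmb a b =>
      (lowerSum b (Xext a b k) i, upperSum a (Yext a b k) i) :=
    (continuous_finsetSum _ fun l _ => continuous_Xext l).prodMk
      (continuous_finsetSum _ fun l _ => continuous_Yext l)
  exact (hσ.continuousAt.comp ((continuousAt_coe_sub_coe hne).comp
    (f := fun k : KAmb a b => (lowerSum b (Xext a b k) i, upperSum a (Yext a b k) i))
    hsums.continuousAt)).continuousWithinAt

lemma mapsTo_sMap {σ : EReal → ℝ} (hσ : ∀ z, σ z ∈ Set.Icc (0 : ℝ) 1) :
    Set.MapsTo (sMap a b σ) (fiber a b p) (Set.Icc (b : ℝ) a) := by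
  intro k hk
  obtain ⟨r, hbr, hra, -⟩ := hk.1
  have h0 : 0 ≤ ∑ i ∈ Ico b a, σ (gap a b k i) := sum_nonneg fun i _ => (hσ _).1
  have h1 : ∑ i ∈ Ico b a, σ (gap a b k i) ≤ a - b := by
    simpa [← card_Ico_cast (hbr.trans hra)] using
      sum_le_card_nsmul (Ico b a) _ 1 fun i _ => (hσ (gap a b k i)).2
  rw [sMap_eq]
  constructor <;> linarith

lemma injOn_sMap {σ : EReal → ℝ} (hσ : StrictMono σ) :
    Set.InjOn (sMap a b σ) (fiber a b p) := by
  intro k hk k' hk' hs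
  wlog hle : Precedes k k' generalizing k k'
  · exact (this hk' hk hs.symm ((precedes_or_precedes hk hk').resolve_left hle)).symm
  have hsum : ∑ i ∈ Ico b a, σ (gap a b k i) = ∑ i ∈ Ico b a, σ (gap a b k' i) := by
    simpa [sMap_eq] using hs
  have hterm := (sum_eq_sum_iff_of_le fun i _ => hσ.monotone (gap_mono hle i)).1 hsum
  exact eq_of_gap_eq hk hk' fun i hi => hσ.injective (hterm i hi)

lemma surjOn_sMap {σ : EReal → ℝ} (hσ : Continuous σ) (hbot : σ ⊥ = 0) (htop : σ ⊤ = 1) :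
    Set.SurjOn (sMap a b σ) (fiber a b p) (Set.Icc (b : ℝ) a) := by
  intro c hc
  have hab : b ≤ a := by exact_mod_cast hc.1.trans hc.2
  have hivt := (isPreconnected_fiber p).intermediate_value
    (cutPoint_mem_fiber (q := (⊤, 0)) ⟨le_rfl, hab⟩ fun h => (lt_irrefl b h).elim)
    (cutPoint_mem_fiber (q := (0, ⊤)) ⟨hab, le_rfl⟩ fun _ h => (lt_irrefl a h).elim)
    (continuousOn_sMap p hσ)
  rw [sMap_eq_of_forall_gap_eq hab fun _ => gap_cutPoint_b_top_zero,
    sMap_eq_of_forall_gap_eq hab fun _ => gap_cutPoint_a_zero_top, htop, hbot] at hivt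
  exact hivt (by simpa using hc)

end Fiber

section Sigma

variable (ς : EReal ≃ₜ Set.Icc (0 : ℝ) 1)

lemma continuous_sigmaR : Continuous (sigmaR ς) :=
  continuous_subtype_val.comp ς.continuous

lemma strictMono_sigmaR (hς : Monotone (sigmaR ς)) : StrictMono (sigmaR ς) :=
  hς.strictMono_of_injective fun _ _ h => ς.injective (Subtype.ext h)

lemma sigmaR_bot (hς : Monotone (sigmaR ς)) : sigmaR ς ⊥ = 0 := by
  obtain ⟨z, hz⟩ := ς.surjective ⟨0, le_rfl, zero_le_one⟩
  exact le_antisymm (by simpa [sigmaR, hz] using hς (bot_le : ⊥ ≤ z)) (ς ⊥).2.1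

lemma sigmaR_top (hς : Monotone (sigmaR ς)) : sigmaR ς ⊤ = 1 := by
  obtain ⟨z, hz⟩ := ς.surjective ⟨1, zero_le_one, le_rfl⟩
  exact le_antisymm (ς ⊤).2.2 (by simpa [sigmaR, hz] using hς (le_top : z ≤ ⊤))

end Sigma

end JKFlow

theorem statement2_general (a b : ℤ)
    (ς : EReal ≃ₜ Set.Icc (0 : ℝ) 1) (hς : Monotone (sigmaR ς)) (p : Jspace a b) :
    Set.BijOn (sMap a b (sigmaR ς)) (KSet a b ∩ {k | deltaMap a b k = p})
        (Set.Icc (b : ℝ) (a : ℝ)) ∧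
      ∃ e : {k : KAmb a b // k ∈ KSet a b ∧ deltaMap a b k = p} ≃ₜ
          ↥(Set.Icc (b : ℝ) (a : ℝ)),
        ∀ k, (e k : ℝ) = sMap a b (sigmaR ς) (k : KAmb a b) := by
  have hbij : Set.BijOn (sMap a b (sigmaR ς)) (fiber a b p) (Set.Icc (b : ℝ) a) :=
    ⟨mapsTo_sMap p fun z => (ς z).2, injOn_sMap p (strictMono_sigmaR ς hς),
      surjOn_sMap p (continuous_sigmaR ς) (sigmaR_bot ς hς) (sigmaR_top ς hς)⟩
  have : CompactSpace (fiber a b p) := isCompact_iff_compactSpace.1 (isCompact_fiber p)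
  have hcont : Continuous hbij.equiv :=
    (continuousOn_sMap p (continuous_sigmaR ς)).mapsToRestrict hbij.mapsTo
  exact ⟨hbij, hcont.homeoOfEquivCompactToT2, fun _ => rfl⟩

/-- Let `a ≥ b` be integers and `ς : [-∞,∞] → [0,1]` an order-preserving
homeomorphism.  For every `p ∈ J(a,b)`, the restriction of `s_{ab}` to the fiber
`δ_{ab}⁻¹(p) ⊆ K(a;b)` is a bijection onto `[b,a]`, and moreover a homeomorphism, so every
fiber of `δ_{ab}` is homeomorphic to the closed interval `[b,a]`. -/
theorem statement2 (a b : ℤ) (hab : b ≤ a)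
    (ς : EReal ≃ₜ Set.Icc (0 : ℝ) 1) (hς : Monotone (sigmaR ς)) (p : Jspace a b) :
    Set.BijOn (sMap a b (sigmaR ς)) (KSet a b ∩ {k | deltaMap a b k = p})
        (Set.Icc (b : ℝ) (a : ℝ)) ∧
      ∃ e : {k : KAmb a b // k ∈ KSet a b ∧ deltaMap a b k = p} ≃ₜ
          ↥(Set.Icc (b : ℝ) (a : ℝ)),
        ∀ k, (e k : ℝ) = sMap a b (sigmaR ς) (k : KAmb a b) :=
  statement2_general a b ς hς p
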